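/- Let σ be a 3-form on ℝⁿ and let J be an orthogonal skew-symmetric endomorphism of ℝⁿ with J² = −id, such that σ_X(JX) = 0 and σ_X² = −‖X‖² id + X⊗X + (JX)⊗(JX) for all X ∈ ℝⁿ. Let ω_J be the 2-form on ℝⁿ defined by ω_J(X,Y) = ⟨JX, Y⟩. Then the 3-form τ := e_{n+1} ∧ ω_J + σ on ℝ^{n+1} = ℝⁿ ⊕ ℝe_{n+1} is a vector cross product on ℝ^{n+1}. -/

import Mathlib

open scoped RealInnerProductSpace

noncomputable section

/-- Euclidean space `ℝⁿ`. -/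
abbrev Euc (n : ℕ) : Type := EuclideanSpace ℝ (Fin n)

/-- The skew-symmetric endomorphism `τ_X` of `ℝⁿ` associated to a 3-form `τ` and a vector `X`,
characterized by `⟪τ_X Y, Z⟫ = τ (X, Y, Z)`. -/
noncomputable def contr3 {n : ℕ} (τ : AlternatingMap ℝ (Euc n) ℝ (Fin 3)) (X : Euc n) :
    Euc n →ₗ[ℝ] Euc n where
  toFun Y := ∑ i : Fin n,
    ((τ.curryLeft X).curryLeft Y ![EuclideanSpace.single i 1]) • EuclideanSpace.single i (1 : ℝ)
  map_add' Y₁ Y₂ := by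
    simp [map_add, add_smul, Finset.sum_add_distrib]
  map_smul' c Y := by
    simp [map_smul, smul_smul, Finset.smul_sum]

/-- `τ` is a vector cross product: `‖τ_X Y‖² = ‖X‖²‖Y‖² − ⟪X,Y⟫²`. -/
def IsVCP {n : ℕ} (τ : AlternatingMap ℝ (Euc n) ℝ (Fin 3)) : Prop :=
  ∀ X Y : Euc n, ‖contr3 τ X Y‖ ^ 2 = ‖X‖ ^ 2 * ‖Y‖ ^ 2 - ⟪X, Y⟫ ^ 2

/-- `σ` is a generalized vector cross product: there is a nonzero skew-symmetric endomorphism `A`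
such that for every unit vector `X`, `σ_X` is orthogonally conjugate to `A`. -/
def IsGVCP {n : ℕ} (σ : AlternatingMap ℝ (Euc n) ℝ (Fin 3)) : Prop :=
  ∃ A : Euc n →ₗ[ℝ] Euc n, A ≠ 0 ∧ (∀ X Y : Euc n, ⟪A X, Y⟫ = -⟪X, A Y⟫) ∧
    ∀ X : Euc n, ‖X‖ = 1 → ∃ u : Euc n ≃ₗᵢ[ℝ] Euc n,
      ∀ Y : Euc n, contr3 σ X Y = u (A (u.symm Y))

/-- The endomorphism `U ⊗ V : X ↦ ⟪X, V⟫ U`. -/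
noncomputable def tens {n : ℕ} (U V : Euc n) : Euc n →ₗ[ℝ] Euc n where
  toFun X := ⟪X, V⟫ • U
  map_add' X₁ X₂ := by rw [inner_add_left, add_smul]
  map_smul' c X := by simp only [RingHom.id_apply]; rw [real_inner_smul_left, mul_smul]

/-- The `i`-th coordinate, as a linear functional on `ℝⁿ`. -/
noncomputable def coordL {n : ℕ} (i : Fin n) : Euc n →ₗ[ℝ] ℝ where
  toFun x := x i
  map_add' _ _ := rfl
  map_smul' _ _ := rfl

/-- The elementary 3-form `eᵢ ∧ eⱼ ∧ e_k` on `ℝⁿ`. -/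
noncomputable def elem3 {n : ℕ} (i j k : Fin n) : AlternatingMap ℝ (Euc n) ℝ (Fin 3) :=
  (Matrix.detRowAlternating : AlternatingMap ℝ (Fin 3 → ℝ) ℝ (Fin 3)).compLinearMap
    (LinearMap.pi (fun s : Fin 3 => coordL (![i, j, k] s)))

/-- The action of an orthogonal transformation `α` on 3-forms:
`(α · τ)(X,Y,Z) = τ(α⁻¹X, α⁻¹Y, α⁻¹Z)`. -/
noncomputable def oAct {n : ℕ} (α : Euc n ≃ₗᵢ[ℝ] Euc n)
    (τ : AlternatingMap ℝ (Euc n) ℝ (Fin 3)) : AlternatingMap ℝ (Euc n) ℝ (Fin 3) :=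
  τ.compLinearMap α.symm.toLinearEquiv.toLinearMap

/-- The volume form `e₁ ∧ e₂ ∧ e₃` (in any `ℝⁿ` with `n ≥ 3`). -/
noncomputable def vol3Gen {n : ℕ} (h : 3 ≤ n) : AlternatingMap ℝ (Euc n) ℝ (Fin 3) :=
  elem3 ⟨0, by omega⟩ ⟨1, by omega⟩ ⟨2, by omega⟩

/-- The fundamental `G₂` 3-form
`τ₀ = e₁∧e₂∧e₇ + e₃∧e₄∧e₇ + e₅∧e₆∧e₇ + e₁∧e₃∧e₅ − e₁∧e₄∧e₆ − e₂∧e₃∧e₆ − e₂∧e₄∧e₅`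
(with 1-indexed basis vectors, stated in any `ℝⁿ` with `n ≥ 7`). -/
noncomputable def tau0Gen {n : ℕ} (h : 7 ≤ n) : AlternatingMap ℝ (Euc n) ℝ (Fin 3) :=
  elem3 ⟨0, by omega⟩ ⟨1, by omega⟩ ⟨6, by omega⟩
  + elem3 ⟨2, by omega⟩ ⟨3, by omega⟩ ⟨6, by omega⟩
  + elem3 ⟨4, by omega⟩ ⟨5, by omega⟩ ⟨6, by omega⟩
  + elem3 ⟨0, by omega⟩ ⟨2, by omega⟩ ⟨4, by omega⟩
  - elem3 ⟨0, by omega⟩ ⟨3, by omega⟩ ⟨5, by omega⟩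
  - elem3 ⟨1, by omega⟩ ⟨2, by omega⟩ ⟨5, by omega⟩
  - elem3 ⟨1, by omega⟩ ⟨3, by omega⟩ ⟨4, by omega⟩

/-- The `SU(3)` 3-form `σ₀ = e₁∧e₃∧e₅ − e₁∧e₄∧e₆ − e₂∧e₃∧e₆ − e₂∧e₄∧e₅`
(with 1-indexed basis vectors, stated in any `ℝⁿ` with `n ≥ 6`). -/
noncomputable def sigma0Gen {n : ℕ} (h : 6 ≤ n) : AlternatingMap ℝ (Euc n) ℝ (Fin 3) :=
  elem3 ⟨0, by omega⟩ ⟨2, by omega⟩ ⟨4, by omega⟩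
  - elem3 ⟨0, by omega⟩ ⟨3, by omega⟩ ⟨5, by omega⟩
  - elem3 ⟨1, by omega⟩ ⟨2, by omega⟩ ⟨5, by omega⟩
  - elem3 ⟨1, by omega⟩ ⟨3, by omega⟩ ⟨4, by omega⟩

end

/-- The projection `ℝ^{n+1} = ℝⁿ ⊕ ℝ e_{n+1} → ℝⁿ` (dropping the last coordinate). -/
noncomputable def projLast {n : ℕ} : Euc (n + 1) →ₗ[ℝ] Euc n where
  toFun x := (EuclideanSpace.equiv (Fin n) ℝ).symm fun i => x i.castSucc
  map_add' x y := by ext i; simp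
  map_smul' c x := by ext i; simp

/-!
Write `x = X + a e` and `y = Y + b e` with `X, Y ∈ ℝⁿ` and `e = e_{n+1}`. Then
`τ_x y = a JY − b JX + σ_X Y + ⟪JX, Y⟫ e`. Since `σ_X` kills `JX` and is skew, `σ_X Y` is
orthogonal to `JX` and `JY`, and the formula for `σ_X²` gives
`‖σ_X Y‖² = ‖X‖²‖Y‖² − ⟪X,Y⟫² − ⟪JX,Y⟫²`. The term `⟪JX,Y⟫²` cancels against the
`e`-component, and what remains is `(‖X‖² + a²)(‖Y‖² + b²) − (⟪X,Y⟫ + ab)²`, as `J` is orthogonal.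
-/

section Contraction

variable {n : ℕ} (τ : AlternatingMap ℝ (Euc n) ℝ (Fin 3))

theorem inner_contr3 (X Y Z : Euc n) : ⟪contr3 τ X Y, Z⟫ = τ ![X, Y, Z] := by
  let f : Euc n →ₗ[ℝ] ℝ := ((τ.curryLeft X).curryLeft Y).toMultilinearMap.toLinearMap ![0] 0
  have hf (W : Euc n) : f W = τ ![X, Y, W] := by
    change τ (Matrix.vecCons X (Matrix.vecCons Y (Function.update ![0] 0 W))) = _
    congr
    ext i
    fin_cases i
    rfl
  calc ⟪contr3 τ X Y, Z⟫ = ∑ i, Z i • f (EuclideanSpace.basisFun (Fin n) ℝ i) := by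
        simp [contr3, sum_inner, real_inner_smul_left, hf, EuclideanSpace.inner_single_left,
          mul_comm]
  _ = f Z := by
        simp_rw [← map_smul, ← map_sum]
        congr
        exact (EuclideanSpace.basisFun (Fin n) ℝ).toBasis.sum_repr Z
  _ = τ ![X, Y, Z] := hf Z

theorem inner_contr3_swap_right (X Y Z : Euc n) :
    ⟪contr3 τ X Y, Z⟫ = -⟪contr3 τ X Z, Y⟫ := by
  rw [inner_contr3, inner_contr3, ← τ.map_swap _ (by decide : (1 : Fin 3) ≠ 2)]
  congr 1
  ext i
  fin_cases i <;> rfl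

theorem inner_contr3_swap_left (X Y Z : Euc n) :
    ⟪contr3 τ Y X, Z⟫ = -⟪contr3 τ X Y, Z⟫ := by
  rw [inner_contr3, inner_contr3, ← τ.map_swap _ (by decide : (0 : Fin 3) ≠ 1)]
  congr 1
  ext i
  fin_cases i <;> rfl

end Contraction

section ContractionWithComplexStructure

variable {n : ℕ} {σ : AlternatingMap ℝ (Euc n) ℝ (Fin 3)} {J : Euc n →ₗ[ℝ] Euc n}

theorem inner_contr3_apply_self_left_eq_zero (hker : ∀ X : Euc n, contr3 σ X (J X) = 0)
    (X Y : Euc n) : ⟪contr3 σ X Y, J X⟫ = 0 := by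
  rw [inner_contr3_swap_right, hker, inner_zero_left, neg_zero]

theorem inner_contr3_apply_self_right_eq_zero (hker : ∀ X : Euc n, contr3 σ X (J X) = 0)
    (X Y : Euc n) : ⟪contr3 σ X Y, J Y⟫ = 0 := by
  rw [inner_contr3_swap_left, inner_contr3_apply_self_left_eq_zero hker, neg_zero]

theorem norm_contr3_sq_of_contr3_sq (hsq : ∀ X : Euc n, contr3 σ X ∘ₗ contr3 σ X =
      (-(‖X‖ ^ 2)) • LinearMap.id + tens X X + tens (J X) (J X)) (X Y : Euc n) :
    ‖contr3 σ X Y‖ ^ 2 = ‖X‖ ^ 2 * ‖Y‖ ^ 2 - ⟪X, Y⟫ ^ 2 - ⟪J X, Y⟫ ^ 2 := by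
  have hsqY : contr3 σ X (contr3 σ X Y) = (-(‖X‖ ^ 2)) • Y + ⟪Y, X⟫ • X + ⟪Y, J X⟫ • J X :=
    LinearMap.congr_fun (hsq X) Y
  rw [← real_inner_self_eq_norm_sq, inner_contr3_swap_right, hsqY]
  simp only [inner_add_left, real_inner_smul_left, real_inner_self_eq_norm_sq]
  rw [real_inner_comm X Y, real_inner_comm (J X) Y]
  ring

theorem norm_sq_smul_sub_smul_add_contr3 (hJorth : ∀ X Y : Euc n, ⟪J X, J Y⟫ = ⟪X, Y⟫)
    (hker : ∀ X : Euc n, contr3 σ X (J X) = 0)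
    (hsq : ∀ X : Euc n, contr3 σ X ∘ₗ contr3 σ X =
      (-(‖X‖ ^ 2)) • LinearMap.id + tens X X + tens (J X) (J X)) (a b : ℝ) (X Y : Euc n) :
    ‖a • J Y - b • J X + contr3 σ X Y‖ ^ 2 = a ^ 2 * ‖Y‖ ^ 2 + b ^ 2 * ‖X‖ ^ 2
      - 2 * a * b * ⟪X, Y⟫ + ‖X‖ ^ 2 * ‖Y‖ ^ 2 - ⟪X, Y⟫ ^ 2 - ⟪J X, Y⟫ ^ 2 := by
  have hX := inner_contr3_apply_self_left_eq_zero hker X Y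
  have hY := inner_contr3_apply_self_right_eq_zero hker X Y
  rw [real_inner_comm] at hX hY
  rw [← real_inner_self_eq_norm_sq]
  simp only [inner_add_left, inner_add_right, inner_sub_left, inner_sub_right,
    real_inner_smul_left, real_inner_smul_right, hJorth, hX, hY,
    real_inner_comm (J _) (contr3 σ X Y)]
  simp only [real_inner_self_eq_norm_sq, norm_contr3_sq_of_contr3_sq hsq, real_inner_comm Y X]
  ring

end ContractionWithComplexStructure

section LastCoordinate

variable {n : ℕ}

theorem inner_eq_inner_projLast_add (x y : Euc (n + 1)) :
    ⟪x, y⟫ = ⟪projLast x, projLast y⟫ + x (Fin.last n) * y (Fin.last n) := by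
  simp only [PiLp.inner_apply, RCLike.inner_apply, conj_trivial, Fin.sum_univ_castSucc]
  exact congrArg₂ (· + ·) rfl (mul_comm _ _)

theorem norm_sq_eq_norm_projLast_sq_add (x : Euc (n + 1)) :
    ‖x‖ ^ 2 = ‖projLast x‖ ^ 2 + x (Fin.last n) ^ 2 := by
  rw [← real_inner_self_eq_norm_sq, ← real_inner_self_eq_norm_sq, inner_eq_inner_projLast_add, sq]

theorem projLast_single_castSucc (i : Fin n) (r : ℝ) :
    projLast (EuclideanSpace.single i.castSucc r) = EuclideanSpace.single i r := by
  ext j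
  simp [projLast, PiLp.single_apply, Fin.castSucc_inj]

theorem projLast_single_last (r : ℝ) :
    projLast (EuclideanSpace.single (Fin.last n) r) = 0 := by
  ext j
  simp [projLast]

theorem norm_sq_of_forall_inner_eq {v : Euc (n + 1)} {W : Euc n} {c : ℝ}
    (h : ∀ z : Euc (n + 1), ⟪v, z⟫ = ⟪W, projLast z⟫ + c * z (Fin.last n)) :
    ‖v‖ ^ 2 = ‖W‖ ^ 2 + c ^ 2 := by
  have hproj : projLast v = W := by
    ext i
    change v i.castSucc = W i
    simpa [projLast_single_castSucc, (Fin.castSucc_lt_last i).ne,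
      EuclideanSpace.inner_single_right] using h (EuclideanSpace.single i.castSucc 1)
  have hlast : v (Fin.last n) = c := by
    simpa [projLast_single_last, EuclideanSpace.inner_single_right]
      using h (EuclideanSpace.single (Fin.last n) 1)
  rw [norm_sq_eq_norm_projLast_sq_add, hproj, hlast]

end LastCoordinate

theorem inner_contr3_eq_of_forall_apply_eq {n : ℕ} {σ : AlternatingMap ℝ (Euc n) ℝ (Fin 3)}
    {J : Euc n →ₗ[ℝ] Euc n} {τ : AlternatingMap ℝ (Euc (n + 1)) ℝ (Fin 3)}
    (hτ : ∀ x y z : Euc (n + 1), τ ![x, y, z] =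
      x (Fin.last n) * ⟪J (projLast y), projLast z⟫
      - y (Fin.last n) * ⟪J (projLast x), projLast z⟫
      + z (Fin.last n) * ⟪J (projLast x), projLast y⟫
      + σ ![projLast x, projLast y, projLast z]) (x y z : Euc (n + 1)) :
    ⟪contr3 τ x y, z⟫ = ⟪x (Fin.last n) • J (projLast y) - y (Fin.last n) • J (projLast x)
        + contr3 σ (projLast x) (projLast y), projLast z⟫
      + ⟪J (projLast x), projLast y⟫ * z (Fin.last n) := by
  rw [inner_contr3, hτ, inner_add_left, inner_sub_left, real_inner_smul_left,
    real_inner_smul_left, inner_contr3]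
  ring

theorem statement13_general {n : ℕ} (σ : AlternatingMap ℝ (Euc n) ℝ (Fin 3))
    (J : Euc n →ₗ[ℝ] Euc n)
    (hJorth : ∀ X Y : Euc n, ⟪J X, J Y⟫ = ⟪X, Y⟫)
    (hker : ∀ X : Euc n, contr3 σ X (J X) = 0)
    (hsq : ∀ X : Euc n, contr3 σ X ∘ₗ contr3 σ X =
      (-(‖X‖ ^ 2)) • LinearMap.id + tens X X + tens (J X) (J X))
    (τ : AlternatingMap ℝ (Euc (n + 1)) ℝ (Fin 3))
    (hτ : ∀ x y z : Euc (n + 1), τ ![x, y, z] =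
      x (Fin.last n) * ⟪J (projLast y), projLast z⟫
      - y (Fin.last n) * ⟪J (projLast x), projLast z⟫
      + z (Fin.last n) * ⟪J (projLast x), projLast y⟫
      + σ ![projLast x, projLast y, projLast z]) :
    IsVCP τ := by
  intro x y
  rw [norm_sq_of_forall_inner_eq (inner_contr3_eq_of_forall_apply_eq hτ x y),
    norm_sq_smul_sub_smul_add_contr3 hJorth hker hsq, norm_sq_eq_norm_projLast_sq_add x,
    norm_sq_eq_norm_projLast_sq_add y, inner_eq_inner_projLast_add]
  ring

/-- Let `σ` be a 3-form on `ℝⁿ` and let `J` be an orthogonal skew-symmetric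
endomorphism of `ℝⁿ` with `J² = −id`, such that `σ_X (JX) = 0` and
`σ_X² = −‖X‖² id + X⊗X + (JX)⊗(JX)` for all `X ∈ ℝⁿ`. Let `ω_J` be the 2-form
`ω_J(X,Y) = ⟪JX, Y⟫`. Then the 3-form `τ := e_{n+1} ∧ ω_J + σ` on `ℝ^{n+1} = ℝⁿ ⊕ ℝ e_{n+1}`
(characterized by the explicit formula below) is a vector cross product on `ℝ^{n+1}`. -/
theorem statement13 {n : ℕ} (σ : AlternatingMap ℝ (Euc n) ℝ (Fin 3))
    (J : Euc n →ₗ[ℝ] Euc n)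
    (hJorth : ∀ X Y : Euc n, ⟪J X, J Y⟫ = ⟪X, Y⟫)
    (hJskew : ∀ X Y : Euc n, ⟪J X, Y⟫ = -⟪X, J Y⟫)
    (hJ2 : J ∘ₗ J = -LinearMap.id)
    (hker : ∀ X : Euc n, contr3 σ X (J X) = 0)
    (hsq : ∀ X : Euc n, contr3 σ X ∘ₗ contr3 σ X =
      (-(‖X‖ ^ 2)) • LinearMap.id + tens X X + tens (J X) (J X))
    (τ : AlternatingMap ℝ (Euc (n + 1)) ℝ (Fin 3))
    (hτ : ∀ x y z : Euc (n + 1), τ ![x, y, z] =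
      x (Fin.last n) * ⟪J (projLast y), projLast z⟫
      - y (Fin.last n) * ⟪J (projLast x), projLast z⟫
      + z (Fin.last n) * ⟪J (projLast x), projLast y⟫
      + σ ![projLast x, projLast y, projLast z]) :
    IsVCP τ :=
  statement13_general σ J hJorth hker hsq τ hτ
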